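/- In any decision-making mechanism with imperfect information, for any distinct agents a and b and any outcome o, the sets ewin_a(o) and ewin_b(ō) are disjoint. -/
import Mathlib


inductive Outcome where
  | yes : Outcome
  | no : Outcome
deriving DecidableEq

def Outcome.flip : Outcome → Outcome
  | .yes => .no
  | .no => .yes

/-- A decision-making mechanism (perfect information):
a finite rooted directed tree `(V, E)` with root `root`,
agents `A`, actions `Act`, available-action sets `Δ`,
choice functions `τ`, and a leaf labelling `lab`. -/
structure Mech (V A Act : Type) where
  finV : Fintype V
  E : V → V → Prop
  root : V
  root_no_parent : ∀ v, ¬ E v root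
  unique_parent : ∀ u v w, E u w → E v w → u = v
  reach : ∀ v, Relation.ReflTransGen E root v
  Δ : A → V → Set Act
  Δ_nonempty : ∀ a v, (∃ u, E v u) → (Δ a v).Nonempty
  τ : V → (A → Act) → V
  τ_child : ∀ v δ, (∃ u, E v u) → (∀ b, δ b ∈ Δ b v) → E v (τ v δ)
  lab : V → Outcome

namespace Mech

variable {V A Act : Type}

def IsLeaf (M : Mech V A Act) (v : V) : Prop := ∀ u, ¬ M.E v u

def IsDecision (M : Mech V A Act) (v : V) : Prop := ∃ u, M.E v u

/-- `Next a d v` : the set of children the process can move to from `v`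
when agent `a` chooses action `d`. -/
def Next (M : Mech V A Act) (a : A) (d : Act) (v : V) : Set V :=
  { u | ∃ δ : A → Act, (∀ b, δ b ∈ M.Δ b v) ∧ δ a = d ∧ u = M.τ v δ }

/-- `win_a(o)`: the smallest set containing all leaves labelled `o` and
closed under: if `Next a d v ⊆ win_a(o)` for some available action `d`
at a decision node `v`, then `v ∈ win_a(o)`. -/
inductive Win (M : Mech V A Act) (a : A) (o : Outcome) : V → Prop where
  | leaf (v : V) : M.IsLeaf v → M.lab v = o → Win M a o v
  | step (v : V) (d : Act) : M.IsDecision v → d ∈ M.Δ a v →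
      (∀ u ∈ M.Next a d v, Win M a o u) → Win M a o v

/-- A decision path starting at the root. -/
def RootPath (M : Mech V A Act) (l : List V) : Prop :=
  l.head? = some M.root ∧ l.Chain' M.E

/-- Agent `a` is (counterfactually) responsible at leaf `v`. -/
def Responsible (M : Mech V A Act) (a : A) (v : V) : Prop :=
  ∃ l : List V, M.RootPath l ∧ l.getLast? = some v ∧
    ∃ u ∈ l, M.IsDecision u ∧ M.Win a (M.lab v).flip u

def GapFree (M : Mech V A Act) : Prop :=
  ∀ v, M.IsLeaf v → ∃ a, M.Responsible a v

def Dictator (M : Mech V A Act) (a : A) (v : V) : Prop :=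
  M.Win a Outcome.yes v ∧ M.Win a Outcome.no v

def ElectedDictatorship (M : Mech V A Act) : Prop :=
  ∀ (l : List V) (v : V), M.RootPath l → l.getLast? = some v → M.IsLeaf v →
    ∃ u ∈ l, ∃ a, M.Dictator a u

end Mech

/-- A decision-making mechanism with imperfect information. -/
structure IMech (V A Act : Type) extends Mech V A Act where
  sim : A → V → V → Prop
  sim_equiv : ∀ a, Equivalence (sim a)
  sim_decision : ∀ a u v, sim a u v → ((∃ w, E u w) ↔ (∃ w, E v w))
  sim_Δ : ∀ a u v, sim a u v → Δ a u = Δ a v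

namespace IMech

variable {V A Act : Type}

/-- `Next a d ([v]_a)` : the union of `Next a d u` over all `u ∼_a v`. -/
def NextCl (M : IMech V A Act) (a : A) (d : Act) (v : V) : Set V :=
  { w | ∃ u, M.sim a v u ∧ w ∈ M.toMech.Next a d u }

/-- `ewin_a(o)`. -/
inductive EWin (M : IMech V A Act) (a : A) (o : Outcome) : V → Prop where
  | leaf (v : V) : M.toMech.IsLeaf v → M.lab v = o → EWin M a o v
  | known (v : V) (d : Act) : M.toMech.IsDecision v → d ∈ M.Δ a v →
      (∀ w ∈ M.NextCl a d v, EWin M a o w) → EWin M a o v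
  | blind (v : V) : M.toMech.IsDecision v →
      (∀ d ∈ M.Δ a v, ∀ w ∈ M.toMech.Next a d v, EWin M a o w) → EWin M a o v

/-- `uwin_a(o)`. -/
inductive UWin (M : IMech V A Act) (a : A) (o : Outcome) : V → Prop where
  | leaf (v : V) : M.toMech.IsLeaf v → M.lab v = o → UWin M a o v
  | known (v : V) (d : Act) : M.toMech.IsDecision v → d ∈ M.Δ a v →
      (∀ w ∈ M.NextCl a d v, UWin M a o w) → UWin M a o v

def EpistemicallyResponsible (M : IMech V A Act) (a : A) (v : V) : Prop :=
  ∃ l : List V, M.toMech.RootPath l ∧ l.getLast? = some v ∧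
    ∃ u ∈ l, M.toMech.IsDecision u ∧ M.EWin a (M.lab v).flip u

def EpistemicGapFree (M : IMech V A Act) : Prop :=
  ∀ v, M.toMech.IsLeaf v → ∃ a, M.EpistemicallyResponsible a v

def EpistemicDictator (M : IMech V A Act) (a : A) (v : V) : Prop :=
  M.EWin a Outcome.yes v ∧ M.EWin a Outcome.no v

def ElectedEpistemicDictatorship (M : IMech V A Act) : Prop :=
  ∀ (l : List V) (v : V), M.toMech.RootPath l → l.getLast? = some v →
    M.toMech.IsLeaf v → ∃ u ∈ l, ∃ a, M.EpistemicDictator a u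

def SemiEpistemicDictator (M : IMech V A Act) (a : A) (v : V) : Prop :=
  ∃ o : Outcome, M.EWin a o v ∧ M.toMech.Win a o.flip v

def ElectedSemiEpistemicDictatorship (M : IMech V A Act) : Prop :=
  ∀ (l : List V) (v : V), M.toMech.RootPath l → l.getLast? = some v →
    M.toMech.IsLeaf v → ∃ u ∈ l, ∃ a, M.SemiEpistemicDictator a u

end IMech

lemma ewin_sub_win {V A Act : Type} (M : IMech V A Act) (a : A) (o : Outcome)
    {v : V} (h : M.EWin a o v) : M.toMech.Win a o v := by
  induction h with
  | leaf v hl ho => exact Mech.Win.leaf v hl ho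
  | known v d hdec hd hnext ih =>
      exact Mech.Win.step v d hdec hd fun u hu =>
        ih u ⟨v, (M.sim_equiv a).refl v, hu⟩
  | blind v hdec hnext ih =>
      obtain ⟨d, hd⟩ := M.Δ_nonempty a v hdec
      exact Mech.Win.step v d hdec hd fun u hu => ih d hd u hu

lemma win_disjoint {V A Act : Type} (M : IMech V A Act) (a b : A) (hab : a ≠ b)
    (o : Outcome) {v : V} (ha : M.toMech.Win a o v)
    (hb : M.toMech.Win b o.flip v) : False := by
  induction ha with
  | leaf v hl ho =>
      cases hb with
      | leaf _ _ ho' =>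
          rw [ho] at ho'; cases o <;> simp [Outcome.flip] at ho'
      | step _ _ hdec _ _ => obtain ⟨u, hu⟩ := hdec; exact hl u hu
  | step v da hdec hda hnext ih =>
      cases hb with
      | leaf _ hl _ => obtain ⟨u, hu⟩ := hdec; exact hl u hu
      | step _ db hdec' hdb hnext' =>
          classical
          set δ : A → Act := fun c =>
            if c = a then da else if c = b then db
            else (M.Δ_nonempty c v hdec).choose with hδ
          have hδmem : ∀ c, δ c ∈ M.Δ c v := by
            intro c
            by_cases hca : c = a
            · simpa [hδ, hca] using hda
            · by_cases hcb : c = b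
              · subst hcb; simpa [hδ, hab.symm] using hdb
              · simpa [hδ, hca, hcb] using (M.Δ_nonempty c v hdec).choose_spec
          have hδa : δ a = da := by simp [hδ]
          have hδb : δ b = db := by simp [hδ, hab.symm]
          have hu1 : M.τ v δ ∈ M.toMech.Next a da v := ⟨δ, hδmem, hδa, rfl⟩
          have hu2 : M.τ v δ ∈ M.toMech.Next b db v := ⟨δ, hδmem, hδb, rfl⟩
          exact ih _ hu1 (hnext' _ hu2)

theorem stmt19 {V A Act : Type} (M : IMech V A Act) (a b : A) (hab : a ≠ b)
    (o : Outcome) :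
    Disjoint {v | M.EWin a o v} {v | M.EWin b o.flip v} := by
  rw [Set.disjoint_left]
  intro v ha hb
  exact win_disjoint M a b hab o (ewin_sub_win M a o ha) (ewin_sub_win M b o.flip hb)
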